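/- In model D, the discrete recursive equilibrium equations 0 = Σ_{j=1}^{i−1} f_j f_{i−j} − (2m₀+1) f_i + 2 b_i (for all i ≥ 1), together with b_i = Σ_{j=i}^∞ f_j/(j+1), imply that f_i is uniquely determined for each i by the recursion f_i = (1+2m₀)^{−1} ( 2 b_i + Σ_{j=1}^{i−1} f_j f_{i−j} ) and b_{i+1} = b_i − f_i/(i+1), where b₁ = (m₀ − m₀²)/2. -/

import Mathlib

/-!
Since `1 + 2 m₀ ≠ 0`, the `i`-th equation can be solved for `f i`, and the tail sums satisfy
`b (i + 1) = b i - f i / (i + 1)`; so by strong induction `f` is determined by `b 1`. The value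
of `b 1` comes from summing all the equations over `i ≥ 1`: the convolutions sum to `m₀²`
(Cauchy product), the `f i` to `m₀`, and by Fubini `∑_{i ≥ 1} b i = ∑_j j f j / (j + 1) = m₀ - b 1`.
Hence `0 = m₀² - (2 m₀ + 1) m₀ + 2 (m₀ - b 1)`.
-/

open Finset

noncomputable def tailSum (c : ℕ → ℝ) (i : ℕ) : ℝ :=
  ∑' j, if i ≤ j then c j else 0

def ModelDEquilibrium (m₀ : ℝ) (f b : ℕ → ℝ) : Prop :=
  ∀ i, 1 ≤ i → 0 = (∑ j ∈ Ico 1 i, f j * f (i - j)) - (2 * m₀ + 1) * f i + 2 * b i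

section TailSum

variable {c : ℕ → ℝ}

lemma summable_ite_le (hc : Summable c) (i : ℕ) :
    Summable fun j => if i ≤ j then c j else 0 :=
  hc.abs.of_norm_bounded fun j => by split_ifs <;> simp

lemma tailSum_zero : tailSum c 0 = ∑' j, c j := by
  simp [tailSum]

lemma tailSum_eq_add_tailSum_succ (hc : Summable c) (i : ℕ) :
    tailSum c i = c i + tailSum c (i + 1) := by
  have hsplit : (fun j => if i ≤ j then c j else 0) =
      fun j => (if j = i then c i else 0) + if i + 1 ≤ j then c j else 0 := by
    funext j
    rcases lt_trichotomy j i with h | rfl | h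
    · simp [h.ne, h.not_ge, show ¬ i + 1 ≤ j by omega]
    · simp
    · simp [h.ne', h.le, show i + 1 ≤ j by omega]
  exact (hsplit ▸ ((hasSum_ite_eq i (c i)).add (summable_ite_le hc (i + 1)).hasSum)).tsum_eq

/-- Fubini on the triangle `{(j, i) | i < j}`: `c j` occurs in the `j` tails starting at
`1, …, j`. -/
lemma hasSum_tailSum_succ (hc : Summable fun j : ℕ => (j : ℝ) * c j) :
    HasSum (fun i => tailSum c (i + 1)) (∑' j : ℕ, (j : ℝ) * c j) := by
  have hrow : ∀ (d : ℕ → ℝ) (j : ℕ), HasSum (fun i => if i + 1 ≤ j then d j else 0) (j * d j) := by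
    intro d j
    have h : HasSum (fun i => if i + 1 ≤ j then d j else 0)
        (∑ i ∈ range j, if i + 1 ≤ j then d j else 0) :=
      hasSum_sum_of_ne_finset_zero fun i hi => if_neg (by simpa using hi)
    rwa [sum_congr rfl fun i hi => if_pos (by simpa using hi), sum_const, card_range,
      nsmul_eq_mul] at h
  let H : ℕ × ℕ → ℝ := fun p => if p.2 + 1 ≤ p.1 then c p.1 else 0
  have hH : Summable H := by
    let G : ℕ × ℕ → ℝ := fun p => if p.2 + 1 ≤ p.1 then |c p.1| else 0
    have hG : Summable G := by
      rw [summable_prod_of_nonneg fun p => by simp only [G, Pi.zero_apply]; split_ifs <;> simp]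
      refine ⟨fun j => (hrow (fun j => |c j|) j).summable, hc.abs.congr fun j => ?_⟩
      rw [(hrow (fun j => |c j|) j).tsum_eq, abs_mul, Nat.abs_cast]
    exact hG.of_norm_bounded fun p => by simp only [H, G]; split_ifs <;> simp
  have hsum : ∑' p, H p = ∑' j : ℕ, (j : ℝ) * c j :=
    (hH.hasSum.prod_fiberwise (hrow c)).tsum_eq.symm
  have hswap := (Equiv.prodComm ℕ ℕ).summable_iff.mpr hH
  rw [← hsum, ← (Equiv.prodComm ℕ ℕ).tsum_eq]
  exact hswap.hasSum.prod_fiberwise fun i => (hswap.prod_factor i).hasSum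

end TailSum

section Weights

variable {f : ℕ → ℝ}

lemma summable_div_add_one (hf : Summable f) : Summable fun j : ℕ => f j / (j + 1) :=
  hf.abs.of_norm_bounded fun j => by
    rw [Real.norm_eq_abs, abs_div, abs_of_pos (by positivity : (0 : ℝ) < j + 1)]
    exact div_le_self (abs_nonneg _) (by simp)

lemma summable_mul_div_add_one (hf : Summable f) :
    Summable fun j : ℕ => (j : ℝ) * (f j / (j + 1)) :=
  hf.abs.of_norm_bounded fun j => by
    rw [Real.norm_eq_abs, abs_mul, abs_div, Nat.abs_cast,
      abs_of_pos (by positivity : (0 : ℝ) < j + 1), mul_div_assoc', div_le_iff₀ (by positivity)]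
    nlinarith [abs_nonneg (f j)]

end Weights

lemma sum_Ico_one_mul_eq_sum_range {f : ℕ → ℝ} (hf0 : f 0 = 0) (i : ℕ) :
    ∑ j ∈ Ico 1 i, f j * f (i - j) = ∑ k ∈ range (i + 1), f k * f (i - k) := by
  refine sum_subset (fun j hj => ?_) fun j hj hj' => ?_
  · simp only [mem_Ico, mem_range] at hj ⊢
    omega
  · simp only [mem_Ico, mem_range, not_and, not_lt] at hj hj'
    rcases Nat.eq_zero_or_pos j with rfl | hpos
    · rw [hf0, zero_mul]
    · rw [show i - j = 0 by omega, hf0, mul_zero]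

lemma hasSum_sum_Ico_one_mul_self {f : ℕ → ℝ} {m : ℝ} (hf0 : f 0 = 0) (hf : HasSum f m) :
    HasSum (fun i => ∑ j ∈ Ico 1 i, f j * f (i - j)) (m ^ 2) := by
  have hnorm : Summable fun j => ‖f j‖ := hf.summable.abs
  simp_rw [sum_Ico_one_mul_eq_sum_range hf0]
  rw [sq, ← hf.tsum_eq, tsum_mul_tsum_eq_tsum_sum_range_of_summable_norm hnorm hnorm]
  exact (summable_norm_sum_mul_range_of_summable_norm hnorm hnorm).of_norm.hasSum

namespace ModelDEquilibrium

variable {m₀ : ℝ} {f : ℕ → ℝ}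

lemma eq_inv_mul {b : ℕ → ℝ} (h : ModelDEquilibrium m₀ f b) (hm₀ : 1 + 2 * m₀ ≠ 0)
    {i : ℕ} (hi : 1 ≤ i) :
    f i = (1 + 2 * m₀)⁻¹ * (2 * b i + ∑ j ∈ Ico 1 i, f j * f (i - j)) := by
  rw [eq_inv_mul_iff_mul_eq₀ hm₀]
  linarith [h i hi]

lemma tailSum_one (hf0 : f 0 = 0) (hf : HasSum f m₀)
    (h : ModelDEquilibrium m₀ f (tailSum fun j => f j / (j + 1))) :
    tailSum (fun j => f j / (j + 1)) 1 = (m₀ - m₀ ^ 2) / 2 := by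
  set c : ℕ → ℝ := fun j => f j / (j + 1)
  have hc : Summable c := summable_div_add_one hf.summable
  have hb0 : tailSum c 0 = tailSum c 1 := by
    rw [tailSum_eq_add_tailSum_succ hc 0]
    simp [c, hf0]
  have hB : HasSum (fun i => tailSum c (i + 1)) (m₀ - tailSum c 1) := by
    convert hasSum_tailSum_succ (summable_mul_div_add_one hf.summable) using 1
    rw [← hb0, tailSum_zero, ← hf.tsum_eq, ← hf.summable.tsum_sub hc]
    refine tsum_congr fun j => ?_
    simp only [c]
    field_simp
    ring
  have hconv := (hasSum_nat_add_iff' 1).mpr (hasSum_sum_Ico_one_mul_self hf0 hf)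
  have hF := (hasSum_nat_add_iff' 1).mpr hf
  have hall := (hconv.sub (hF.mul_left (2 * m₀ + 1))).add (hB.mul_left 2)
  have hzero := hasSum_zero.unique (hall.congr_fun fun i => h (i + 1) le_add_self)
  simp only [range_one, sum_singleton, zero_le, Ico_eq_empty_of_le, zero_tsub, hf0, mul_zero,
    sum_const_zero, sub_zero] at hzero
  linarith

theorem recursion (hm₀ : 1 + 2 * m₀ ≠ 0) (hf0 : f 0 = 0) (hf : HasSum f m₀)
    (h : ModelDEquilibrium m₀ f (tailSum fun j => f j / (j + 1))) :
    tailSum (fun j => f j / (j + 1)) 1 = (m₀ - m₀ ^ 2) / 2 ∧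
      ∀ i, 1 ≤ i →
        f i = (1 + 2 * m₀)⁻¹ * (2 * tailSum (fun j => f j / (j + 1)) i +
          ∑ j ∈ Ico 1 i, f j * f (i - j)) ∧
        tailSum (fun j => f j / (j + 1)) (i + 1) =
          tailSum (fun j => f j / (j + 1)) i - f i / (i + 1) := by
  refine ⟨h.tailSum_one hf0 hf, fun i hi => ⟨h.eq_inv_mul hm₀ hi, ?_⟩⟩
  rw [tailSum_eq_add_tailSum_succ (summable_div_add_one hf.summable) i]
  ring

end ModelDEquilibrium

lemma eq_of_recursion {a : ℝ} {f g b b' : ℕ → ℝ} (h0 : f 0 = g 0) (h1 : b 1 = b' 1)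
    (hf : ∀ i, 1 ≤ i → f i = a * (2 * b i + ∑ j ∈ Ico 1 i, f j * f (i - j)) ∧
      b (i + 1) = b i - f i / (i + 1))
    (hg : ∀ i, 1 ≤ i → g i = a * (2 * b' i + ∑ j ∈ Ico 1 i, g j * g (i - j)) ∧
      b' (i + 1) = b' i - g i / (i + 1)) (i : ℕ) :
    f i = g i := by
  suffices h : ∀ i, f i = g i ∧ b (i + 1) = b' (i + 1) from (h i).1
  intro i
  induction i using Nat.strong_induction_on with
  | _ i ih =>
    rcases i with _ | k
    · exact ⟨h0, h1⟩
    have hb : b (k + 1) = b' (k + 1) := (ih k k.lt_succ_self).2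
    have hfg : f (k + 1) = g (k + 1) := by
      rw [(hf _ le_add_self).1, (hg _ le_add_self).1, hb]
      congr 2
      refine sum_congr rfl fun j hj => ?_
      simp only [mem_Ico] at hj
      rw [(ih j (by omega)).1, (ih (k + 1 - j) (by omega)).1]
    exact ⟨hfg, by rw [(hf _ le_add_self).2, (hg _ le_add_self).2, hb, hfg]⟩

theorem stmt_18_general (m₀ : ℝ) (hm₀ : m₀ ∈ Set.Ioo (0:ℝ) 1)
    (f b : ℕ → ℝ)
    (hf0 : f 0 = 0) (hsum : Summable f)
    (hm : m₀ = ∑' i : ℕ, f i)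
    (hb : ∀ i, b i = ∑' j : ℕ, if i ≤ j then f j / ((j : ℝ) + 1) else 0)
    (hequi : ∀ i, 1 ≤ i →
      0 = (∑ j ∈ Finset.Ico 1 i, f j * f (i - j)) - (2 * m₀ + 1) * f i + 2 * b i) :
    (b 1 = (m₀ - m₀ ^ 2) / 2) ∧
    (∀ i, 1 ≤ i →
      f i = (1 + 2 * m₀)⁻¹ * (2 * b i + ∑ j ∈ Finset.Ico 1 i, f j * f (i - j)) ∧
      b (i + 1) = b i - f i / ((i : ℝ) + 1)) ∧
    (∀ g bg : ℕ → ℝ,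
      g 0 = 0 → (∀ i, 0 ≤ g i) → Summable g → m₀ = (∑' i : ℕ, g i) →
      (∀ i, bg i = ∑' j : ℕ, if i ≤ j then g j / ((j : ℝ) + 1) else 0) →
      (∀ i, 1 ≤ i →
        0 = (∑ j ∈ Finset.Ico 1 i, g j * g (i - j)) - (2 * m₀ + 1) * g i + 2 * bg i) →
      ∀ i, g i = f i) := by
  have hm₀' : 1 + 2 * m₀ ≠ 0 := by linarith [hm₀.1]
  obtain rfl : b = tailSum fun j => f j / (j + 1) := funext hb
  have hf := ModelDEquilibrium.recursion hm₀' hf0 (hm ▸ hsum.hasSum) hequi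
  refine ⟨hf.1, hf.2, fun g bg hg0 _ hgsum hgm hgb hgequi => ?_⟩
  obtain rfl : bg = tailSum fun j => g j / (j + 1) := funext hgb
  have hg := ModelDEquilibrium.recursion hm₀' hg0 (hgm ▸ hgsum.hasSum) hgequi
  exact eq_of_recursion (hg0.trans hf0.symm) (hg.1.trans hf.1.symm) hg.2 hf.2

/-- The model D equilibrium equations determine the equilibrium sequence uniquely
via the recursion `f_i = (1+2m₀)⁻¹ (2 b_i + Σ_{j<i} f_j f_{i-j})`,
`b_{i+1} = b_i - f_i/(i+1)`, with `b₁ = (m₀ - m₀²)/2`. -/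
theorem stmt_18 (m₀ : ℝ) (hm₀ : m₀ ∈ Set.Ioo (0:ℝ) 1)
    (f b : ℕ → ℝ)
    (hf0 : f 0 = 0) (hfpos : ∀ i, 0 ≤ f i) (hsum : Summable f)
    (hm : m₀ = ∑' i : ℕ, f i)
    (hb : ∀ i, b i = ∑' j : ℕ, if i ≤ j then f j / ((j : ℝ) + 1) else 0)
    (hequi : ∀ i, 1 ≤ i →
      0 = (∑ j ∈ Finset.Ico 1 i, f j * f (i - j)) - (2 * m₀ + 1) * f i + 2 * b i) :
    (b 1 = (m₀ - m₀ ^ 2) / 2) ∧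
    (∀ i, 1 ≤ i →
      f i = (1 + 2 * m₀)⁻¹ * (2 * b i + ∑ j ∈ Finset.Ico 1 i, f j * f (i - j)) ∧
      b (i + 1) = b i - f i / ((i : ℝ) + 1)) ∧
    (∀ g bg : ℕ → ℝ,
      g 0 = 0 → (∀ i, 0 ≤ g i) → Summable g → m₀ = (∑' i : ℕ, g i) →
      (∀ i, bg i = ∑' j : ℕ, if i ≤ j then g j / ((j : ℝ) + 1) else 0) →
      (∀ i, 1 ≤ i →
        0 = (∑ j ∈ Finset.Ico 1 i, g j * g (i - j)) - (2 * m₀ + 1) * g i + 2 * bg i) →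
      ∀ i, g i = f i) :=
  stmt_18_general m₀ hm₀ f b hf0 hsum hm hb hequi
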